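/- Let U be a 4-dimensional oriented real inner product space and h,k (2,0)-tensors on U. (a) If h or k is symmetric, then ⟨h⧢g, (id⊗∗)(k⧢g)⟩ = 0. (b) If h and k are both antisymmetric, then ⟨h⧢g, (id⊗∗)(k⧢g)⟩ = 8⟨h,∗k⟩, where ∗k is the Hodge star of k viewed as a 2-form. -/
import Mathlib


open Finset

/-- The Levi-Civita symbol on Fin 4. -/
noncomputable def eps (i j k l : Fin 4) : ℝ :=
  ((((j : ℤ) - (i : ℤ)) * ((k : ℤ) - (i : ℤ)) * ((l : ℤ) - (i : ℤ)) * ((k : ℤ) - (j : ℤ))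
      * ((l : ℤ) - (j : ℤ)) * ((l : ℤ) - (k : ℤ)) : ℤ) : ℝ) / 12

/-- id⊗∗ : the Hodge star applied to the last two slots of a (4,0)-tensor. -/
noncomputable def hstar (Q : Fin 4 → Fin 4 → Fin 4 → Fin 4 → ℝ) :
    Fin 4 → Fin 4 → Fin 4 → Fin 4 → ℝ :=
  fun i j k l => (1 / 2 : ℝ) * ∑ a, ∑ b, Q i j a b * eps a b k l

/-- The Hodge star of a 2-form (antisymmetric (2,0)-tensor). -/
noncomputable def star2 (k : Fin 4 → Fin 4 → ℝ) : Fin 4 → Fin 4 → ℝ :=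
  fun i j => (1 / 2 : ℝ) * ∑ a, ∑ b, k a b * eps a b i j

/-- The Kulkarni-Nomizu product in components. -/
def kn (h k : Fin 4 → Fin 4 → ℝ) : Fin 4 → Fin 4 → Fin 4 → Fin 4 → ℝ :=
  fun X Y Z W => h X Z * k Y W + h Y W * k X Z - h X W * k Y Z - h Y Z * k X W

/-- The metric in an orthonormal basis. -/
def gdelta : Fin 4 → Fin 4 → ℝ := fun i j => if i = j then 1 else 0

/-- Natural inner product of (2,0)-tensors. -/
def inner2 (h k : Fin 4 → Fin 4 → ℝ) : ℝ := ∑ i, ∑ j, h i j * k i j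

/-- Natural inner product of (4,0)-tensors. -/
def inner4 (P Q : Fin 4 → Fin 4 → Fin 4 → Fin 4 → ℝ) : ℝ :=
  ∑ i, ∑ j, ∑ k, ∑ l, P i j k l * Q i j k l


set_option maxHeartbeats 16000000 in
private lemma key1 (h k : Fin 4 → Fin 4 → ℝ) :
    inner4 (kn h gdelta) (hstar (kn k gdelta)) =
    4*((h 0 1 - h 1 0)*(k 2 3 - k 3 2) - (h 0 2 - h 2 0)*(k 1 3 - k 3 1)
      + (h 0 3 - h 3 0)*(k 1 2 - k 2 1) + (h 1 2 - h 2 1)*(k 0 3 - k 3 0)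
      - (h 1 3 - h 3 1)*(k 0 2 - k 2 0) + (h 2 3 - h 3 2)*(k 0 1 - k 1 0)) := by
  simp only [inner4, hstar, kn, gdelta, eps, Fin.sum_univ_four, Fin.isValue, ↓reduceIte,
    show ((0:Fin 4):ℤ)=0 from rfl, show ((1:Fin 4):ℤ)=1 from rfl,
    show ((2:Fin 4):ℤ)=2 from rfl, show ((3:Fin 4):ℤ)=3 from rfl]
  push_cast
  ring

set_option maxHeartbeats 4000000 in
private lemma key2 (h k : Fin 4 → Fin 4 → ℝ) :
    8 * inner2 h (star2 k) =
    4*((h 0 1 - h 1 0)*(k 2 3 - k 3 2) - (h 0 2 - h 2 0)*(k 1 3 - k 3 1)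
      + (h 0 3 - h 3 0)*(k 1 2 - k 2 1) + (h 1 2 - h 2 1)*(k 0 3 - k 3 0)
      - (h 1 3 - h 3 1)*(k 0 2 - k 2 0) + (h 2 3 - h 3 2)*(k 0 1 - k 1 0)) := by
  simp only [inner2, star2, eps, Fin.sum_univ_four, Fin.isValue,
    show ((0:Fin 4):ℤ)=0 from rfl, show ((1:Fin 4):ℤ)=1 from rfl,
    show ((2:Fin 4):ℤ)=2 from rfl, show ((3:Fin 4):ℤ)=3 from rfl]
  push_cast
  ring

/-- (a) If h or k is symmetric then ⟨h⧢g,(id⊗∗)(k⧢g)⟩ = 0;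
(b) if h and k are both antisymmetric then ⟨h⧢g,(id⊗∗)(k⧢g)⟩ = 8⟨h,∗k⟩. -/
theorem stmt_12 (h k : Fin 4 → Fin 4 → ℝ) :
    (((∀ X Y, h X Y = h Y X) ∨ (∀ X Y, k X Y = k Y X)) →
      inner4 (kn h gdelta) (hstar (kn k gdelta)) = 0) ∧
    (((∀ X Y, h X Y = -(h Y X)) ∧ (∀ X Y, k X Y = -(k Y X))) →
      inner4 (kn h gdelta) (hstar (kn k gdelta)) = 8 * inner2 h (star2 k)) := by
  constructor
  · rintro (hs | ks)
    · rw [key1]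
      linear_combination (4*(k 2 3 - k 3 2))*(hs 0 1) + (-4*(k 1 3 - k 3 1))*(hs 0 2)
        + (4*(k 1 2 - k 2 1))*(hs 0 3) + (4*(k 0 3 - k 3 0))*(hs 1 2)
        + (-4*(k 0 2 - k 2 0))*(hs 1 3) + (4*(k 0 1 - k 1 0))*(hs 2 3)
    · rw [key1]
      linear_combination (4*(h 0 1 - h 1 0))*(ks 2 3) + (-4*(h 0 2 - h 2 0))*(ks 1 3)
        + (4*(h 0 3 - h 3 0))*(ks 1 2) + (4*(h 1 2 - h 2 1))*(ks 0 3)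
        + (-4*(h 1 3 - h 3 1))*(ks 0 2) + (4*(h 2 3 - h 3 2))*(ks 0 1)
  · intro _
    rw [key1, key2]
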